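/- Let J be an ℝ-linear endomorphism of ℂ² with J ∘ J = −Id such that J_st + J is invertible (J_st = multiplication by i), and let A ∈ M₂(ℂ) be its complex matrix, defined by A·V = (J_st + J)^{-1}((J_st − J)(conj V)). Let L : ℂ → ℂ² be an ℝ-linear map, written uniquely as L(ζ) = P·ζ + Q·conj(ζ) with P, Q ∈ ℂ². Then L intertwines the complex structures, i.e. L(iζ) = J(L(ζ)) for all ζ ∈ ℂ, if and only if Q = A·(conj P). In particular, a C¹ map Z : 𝔻 → ℂ² satisfies dZ ∘ J_st = J ∘ dZ at a point ζ if and only if Z_ζ̄ = A·conj(Z_ζ) at ζ. -/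
import Mathlib


open Complex Metric

noncomputable section

/-- The standard complex structure on `ℂ²` (multiplication by `i`), as an ℝ-linear map. -/
def Jst : (ℂ × ℂ) →ₗ[ℝ] (ℂ × ℂ) :=
  (LinearMap.lsmul ℂ (ℂ × ℂ) Complex.I).restrictScalars ℝ

/-- Componentwise complex conjugation on `ℂ²`. -/
def conj2 (v : ℂ × ℂ) : ℂ × ℂ := ((starRingEnd ℂ) v.1, (starRingEnd ℂ) v.2)

/-- Action of a `2×2` complex matrix on `ℂ²` (written as `ℂ × ℂ`). -/
def matVec (A : Matrix (Fin 2) (Fin 2) ℂ) (v : ℂ × ℂ) : ℂ × ℂ :=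
  (A 0 0 * v.1 + A 0 1 * v.2, A 1 0 * v.1 + A 1 1 * v.2)

/-- The Wirtinger derivative `∂Z/∂ζ̄ = (Z_x + i Z_y)/2` of a map `Z : ℂ → ℂ²`. -/
def dbar (Z : ℂ → ℂ × ℂ) (ζ : ℂ) : ℂ × ℂ :=
  (2⁻¹ : ℂ) • (fderiv ℝ Z ζ 1 + Complex.I • fderiv ℝ Z ζ Complex.I)

/-- The Wirtinger derivative `∂Z/∂ζ = (Z_x − i Z_y)/2` of a map `Z : ℂ → ℂ²`. -/
def dz (Z : ℂ → ℂ × ℂ) (ζ : ℂ) : ℂ × ℂ :=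
  (2⁻¹ : ℂ) • (fderiv ℝ Z ζ 1 - Complex.I • fderiv ℝ Z ζ Complex.I)


lemma Jst_apply (v : ℂ × ℂ) : Jst v = Complex.I • v := rfl

lemma key (J : (ℂ × ℂ) →ₗ[ℝ] (ℂ × ℂ))
    (hJJ : J.comp J = -LinearMap.id)
    (hinj : Function.Injective (Jst + J))
    (A : Matrix (Fin 2) (Fin 2) ℂ)
    (hA : ∀ V : ℂ × ℂ, (Jst + J) (matVec A V) = (Jst - J) (conj2 V))
    (L : ℂ →ₗ[ℝ] ℂ × ℂ) (P Q : ℂ × ℂ)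
    (hL : ∀ ζ : ℂ, L ζ = ζ • P + ((starRingEnd ℂ) ζ) • Q) :
    (∀ ζ : ℂ, L (Complex.I * ζ) = J (L ζ)) ↔ Q = matVec A (conj2 P) := by
  have hJ2 : ∀ v, J (J v) = -v := by
    intro v
    have := LinearMap.ext_iff.mp hJJ v
    simpa using this
  have hA' : (Jst + J) (matVec A (conj2 P)) = Jst P - J P := by
    have := hA (conj2 P)
    simp only [conj2, Complex.conj_conj, Prod.mk.eta, LinearMap.sub_apply] at this ⊢
    exact this
  have hL1 : L 1 = P + Q := by simp [hL]
  have hLI : L Complex.I = Complex.I • P - Complex.I • Q := by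
    rw [hL]; simp [Complex.conj_I, neg_smul, sub_eq_add_neg]
  constructor
  · intro h
    apply hinj
    rw [hA']
    have h1 := h 1
    rw [mul_one, hLI, hL1, map_add] at h1
    have hJQ : J Q = Complex.I • P - Complex.I • Q - J P :=
      eq_sub_of_add_eq' h1.symm
    simp only [LinearMap.add_apply, Jst_apply, hJQ]
    abel
  · intro hQ
    have hkey : (Jst + J) Q = Jst P - J P := by rw [hQ, hA']
    simp only [LinearMap.add_apply, Jst_apply] at hkey
    have hJQ : J Q = Complex.I • P - J P - Complex.I • Q := by
      rw [← hkey]; abel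
    have h1 : J (L 1) = L Complex.I := by
      rw [hL1, hLI, map_add, hJQ]; abel
    have h2 : J (L Complex.I) = -(L 1) := by
      have := hJ2 (L 1)
      rwa [h1] at this
    intro ζ
    have hz : ζ = ζ.re • (1 : ℂ) + ζ.im • Complex.I := by
      simp [Complex.real_smul, Complex.re_add_im]
    have hiz : Complex.I * ζ = ζ.re • Complex.I + ζ.im • (-1 : ℂ) := by
      simp only [Complex.real_smul]
      apply Complex.ext <;> simp
    have hLm1 : L (-1) = -(L 1) := map_neg L 1
    rw [hiz, map_add, map_smul, map_smul, hLm1]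
    conv_rhs => rw [hz]
    rw [map_add, map_smul, map_smul, map_add, map_smul, map_smul, h1, h2]

lemma scal (ζ a b : ℂ) :
    (ζ.re : ℂ) * a + (ζ.im : ℂ) * b =
      ζ * (2⁻¹ * (a - Complex.I * b)) + (starRingEnd ℂ) ζ * (2⁻¹ * (a + Complex.I * b)) := by
  have h1 := Complex.add_conj ζ
  have h2 := Complex.sub_conj ζ
  have h3 : Complex.I * Complex.I = -1 := Complex.I_mul_I
  push_cast at h1 h2
  linear_combination (-a/2)*h1 + (Complex.I*b/2)*h2 + ((ζ.im:ℂ)*b)*h3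

/-- An ℝ-linear map `L : ℂ → ℂ²`, written `L(ζ) = ζ·P + conj(ζ)·Q`, intertwines `J_st`
with a linear complex structure `J` (with complex matrix `A`) iff `Q = A·conj(P)`.
In particular, a `C¹` map `Z : 𝔻 → ℂ²` satisfies `dZ ∘ J_st = J ∘ dZ` at `ζ₀` iff
`Z_ζ̄ = A·conj(Z_ζ)` at `ζ₀`. -/
theorem intertwine_iff_CR (J : (ℂ × ℂ) →ₗ[ℝ] (ℂ × ℂ))
    (hJJ : J.comp J = -LinearMap.id)
    (hinv : Function.Bijective (Jst + J))
    (A : Matrix (Fin 2) (Fin 2) ℂ)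
    (hA : ∀ V : ℂ × ℂ, (Jst + J) (matVec A V) = (Jst - J) (conj2 V))
    (L : ℂ →ₗ[ℝ] ℂ × ℂ) (P Q : ℂ × ℂ)
    (hL : ∀ ζ : ℂ, L ζ = ζ • P + ((starRingEnd ℂ) ζ) • Q) :
    ((∀ ζ : ℂ, L (Complex.I * ζ) = J (L ζ)) ↔ Q = matVec A (conj2 P)) ∧
    (∀ (Z : ℂ → ℂ × ℂ) (ζ₀ : ℂ), DifferentiableAt ℝ Z ζ₀ →
      ((∀ ζ : ℂ, fderiv ℝ Z ζ₀ (Complex.I * ζ) = J (fderiv ℝ Z ζ₀ ζ)) ↔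
        dbar Z ζ₀ = matVec A (conj2 (dz Z ζ₀)))) := by
  refine ⟨key J hJJ hinv.injective A hA L P Q hL, ?_⟩
  intro Z ζ₀ _
  have hL' : ∀ ζ : ℂ, ((fderiv ℝ Z ζ₀ : ℂ →L[ℝ] ℂ × ℂ) : ℂ →ₗ[ℝ] ℂ × ℂ) ζ =
      ζ • dz Z ζ₀ + ((starRingEnd ℂ) ζ) • dbar Z ζ₀ := by
    intro ζ
    set f := fderiv ℝ Z ζ₀ with hf
    have hfz : f ζ = ζ.re • f 1 + ζ.im • f Complex.I := by
      conv_lhs => rw [show ζ = ζ.re • (1:ℂ) + ζ.im • Complex.I by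
        simp [Complex.real_smul, Complex.re_add_im]]
      rw [map_add, map_smul, map_smul]
    show f ζ = _
    rw [hfz]
    refine Prod.ext ?_ ?_ <;>
      simp only [dz, dbar, hf, Prod.fst_add, Prod.snd_add, Prod.smul_fst, Prod.smul_snd,
        Prod.fst_sub, Prod.snd_sub, smul_eq_mul, Complex.real_smul] <;>
      exact scal ζ _ _
  have := key J hJJ hinv.injective A hA
    ((fderiv ℝ Z ζ₀ : ℂ →L[ℝ] ℂ × ℂ) : ℂ →ₗ[ℝ] ℂ × ℂ) (dz Z ζ₀) (dbar Z ζ₀) hL'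
  simpa using this
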